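/- Fix any τ ∈ (0,1). Then P( f(S_1,…,S_r,S_{n+1}) ∈ [ẹ_τ^M, ē_τ^M] ) ≥ 2τ·(n−r)/(n+1) − 1. (This is the two-sided coverage guarantee of Proposition 1: [ẹ_τ^M, ē_τ^M] is a level-(2τ(n−r)/(n+1)−1) forecast interval for the transfer error on the unseen domain n+1.) -/

import Mathlib

open MeasureTheory ProbabilityTheory

/-- Tuples of `s` pairwise distinct indices from `Fin m`, i.e. injections `Fin s → Fin m`. -/
abbrev TransferUQ.Tup (s m : ℕ) := {g : Fin s → Fin m // Function.Injective g}

open Classical in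
/-- `F_M((-∞, b])`: the mass that the pooled empirical distribution of transfer errors
`F_M = ((n-r-1)!/n!) ∑_{(𝒯,d) ∈ 𝕋_{r+1,n}} δ_{e_{𝒯,d}}` assigns to `(-∞, b]`. -/
noncomputable def TransferUQ.FMIic (n r : ℕ) (E : TransferUQ.Tup (r+1) n → ℝ) (b : ℝ) : ℝ :=
  ((n - r - 1).factorial : ℝ) / (n.factorial : ℝ) *
    (Finset.univ.filter (fun g : TransferUQ.Tup (r+1) n => E g ≤ b)).card

open Classical in
/-- `F_M([b, ∞))`: the mass that the pooled empirical distribution of transfer errors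
assigns to `[b, ∞)`. -/
noncomputable def TransferUQ.FMIci (n r : ℕ) (E : TransferUQ.Tup (r+1) n → ℝ) (b : ℝ) : ℝ :=
  ((n - r - 1).factorial : ℝ) / (n.factorial : ℝ) *
    (Finset.univ.filter (fun g : TransferUQ.Tup (r+1) n => b ≤ E g)).card

/-- The upper `τ`-th quantile `ē_τ^M = inf {b : F_M((-∞,b]) ≥ τ}` of the pooled empirical
distribution of transfer errors. -/
noncomputable def TransferUQ.ebar (n r : ℕ) (E : TransferUQ.Tup (r+1) n → ℝ) (τ : ℝ) : ℝ :=
  sInf {b : ℝ | τ ≤ TransferUQ.FMIic n r E b}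

/-- The lower `(1-τ)`-th quantile `ẹ_τ^M = Q_{1-τ}(F_M) = sup {b : F_M([b,∞)) ≥ τ}` of the
pooled empirical distribution of transfer errors. -/
noncomputable def TransferUQ.elow (n r : ℕ) (E : TransferUQ.Tup (r+1) n → ℝ) (τ : ℝ) : ℝ :=
  sSup {b : ℝ | τ ≤ TransferUQ.FMIci n r E b}

/-!
Since the samples are i.i.d., relabelling them by a permutation of `Fin (n+1)` leaves their joint
law unchanged, and permutations act transitively on tuples of distinct indices. Hence all
`M' = (n+1)!/(n-r)!` pairs (training tuple, test index) have the same probability that their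
transfer error exceeds at least `k` of the others. At any sample point at most `M' - k` pairs can
do so, so this probability is at most `1 - k/M'`.

If the error on domain `n+1` exceeds `ē_τ^M`, then at least `k = ⌈τ M⌉` of the `M = n!/(n-r-1)!`
pooled errors among the first `n` domains lie strictly below it, and `M/M' = (n-r)/(n+1)`.
The lower tail is the upper one for `-f`, and a union bound over the two tails concludes.
-/

open Finset

lemma Finset.card_filter_le_card_filter_lt_le {T α : Type*} [Fintype T] [LinearOrder α]
    (v : T → α) (k : ℕ) :
    #{t | k ≤ #{g | v g < v t}} ≤ Fintype.card T - k := by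
  classical
  set B : Finset T := {t | k ≤ #{g | v g < v t}}
  obtain hB | ⟨t, htB, hmin⟩ := B.eq_empty_or_nonempty.imp_right (B.exists_min_image v)
  · simp [hB]
  have hdisj : Disjoint B ({g | v g < v t} : Finset T) :=
    disjoint_filter.mpr fun g _ hgB hlt => (hmin g (by simpa [B] using hgB)).not_gt hlt
  have hk : k ≤ #{g | v g < v t} := (mem_filter.mp htB).2
  have := card_union_of_disjoint hdisj ▸ card_le_univ (B ∪ ({g | v g < v t} : Finset T))
  omega

open Classical in
lemma MeasureTheory.sum_measure_le_mul_measure_univ {α ι : Type*} [MeasurableSpace α] [Fintype ι]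
    (ν : Measure α) {A : ι → Set α} (hA : ∀ i, MeasurableSet (A i)) {N : ℕ}
    (hN : ∀ x, #{i | x ∈ A i} ≤ N) :
    ∑ i, ν (A i) ≤ N * ν Set.univ := by
  have hpt : ∀ x, ∑ i, (A i).indicator 1 x ≤ (N : ENNReal) := fun x => by
    simp only [Set.indicator_apply, Pi.one_apply, sum_boole]
    exact_mod_cast hN x
  calc ∑ i, ν (A i) = ∑ i, ∫⁻ x, (A i).indicator 1 x ∂ν := by
        simp only [lintegral_indicator_one (hA _)]
    _ = ∫⁻ x, ∑ i, (A i).indicator 1 x ∂ν :=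
        (lintegral_finsetSum _ fun i _ => measurable_one.indicator (hA i)).symm
    _ ≤ ∫⁻ _, (N : ENNReal) ∂ν := lintegral_mono hpt
    _ = N * ν Set.univ := lintegral_const _

lemma MeasureTheory.measurePreserving_comp_perm {ι 𝒮 : Type*} [Fintype ι] [MeasurableSpace 𝒮]
    (μ : Measure 𝒮) [SigmaFinite μ] (π : Equiv.Perm ι) :
    MeasurePreserving (fun x : ι → 𝒮 => x ∘ π)
      (Measure.pi fun _ => μ) (Measure.pi fun _ => μ) :=
  measurePreserving_arrowCongr' (fun _ => μ) (fun _ => μ) π.symm (MeasurableEquiv.refl 𝒮)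
    fun _ => MeasurePreserving.id μ

lemma MeasureTheory.one_sub_sub_le_measureReal_of_compl_subset {α : Type*} [MeasurableSpace α]
    (P : Measure α) [IsProbabilityMeasure P] {G B₁ B₂ : Set α} (h : Gᶜ ⊆ B₁ ∪ B₂) :
    1 - P.real B₁ - P.real B₂ ≤ P.real G := by
  have := calc 1 = P.real (G ∪ Gᶜ) := by simp
    _ ≤ P.real G + P.real Gᶜ := measureReal_union_le _ _
    _ ≤ P.real G + (P.real B₁ + P.real B₂) :=
        add_le_add_right ((measureReal_mono (μ := P) h).trans (measureReal_union_le _ _)) _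
  linarith

namespace TransferUQ

variable {𝒮 : Type*} {s m n r : ℕ}

lemma card_tup : Fintype.card (Tup s m) = m.descFactorial s := by
  rw [Fintype.card_congr (Equiv.subtypeInjectiveEquivEmbedding (Fin s) (Fin m)),
    Fintype.card_embedding_eq, Fintype.card_fin, Fintype.card_fin]

lemma card_tup_pos (hrn : r < n) : 0 < Fintype.card (Tup (r+1) n) := by
  rw [card_tup]
  exact Nat.descFactorial_pos.mpr hrn

lemma card_tup_div_card_tup (h : r ≤ n) :
    (Fintype.card (Tup (r+1) n) : ℝ) / Fintype.card (Tup (r+1) (n+1)) = (n - r) / (n + 1) := by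
  have hpos : (0 : ℝ) < n.descFactorial r := by exact_mod_cast Nat.descFactorial_pos.mpr h
  rw [card_tup, card_tup, Nat.descFactorial_succ, Nat.succ_descFactorial_succ]
  push_cast [Nat.cast_sub h]
  field_simp

def Tup.relabel (π : Equiv.Perm (Fin m)) : Tup s m ≃ Tup s m where
  toFun t := ⟨π ∘ t.1, π.injective.comp t.2⟩
  invFun t := ⟨π.symm ∘ t.1, π.symm.injective.comp t.2⟩
  left_inv t := by ext; simp
  right_inv t := by ext; simp

lemma Tup.exists_relabel_eq (a b : Tup s m) : ∃ π : Equiv.Perm (Fin m), Tup.relabel π a = b := by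
  obtain ⟨π, hπ⟩ := Equiv.Perm.exists_extending_pair a.1 b.1 a.2 b.2
  exact ⟨π, Subtype.ext (funext hπ)⟩

-- `((1, …, r), n+1)` in the paper's `1`-based indexing.
def testTup (h : r ≤ n) : Tup (r+1) (n+1) :=
  ⟨Fin.snoc (Fin.castLE (h.trans n.le_succ)) (Fin.last n),
    Fin.snoc_injective_of_injective (Fin.castLE_injective _) fun ⟨i, hi⟩ =>
      (Fin.ext_iff.mp hi).not_lt (i.2.trans_le h)⟩

noncomputable def rank (f : (Fin s → 𝒮) → ℝ) (x : Fin m → 𝒮) (t : Tup s m) : ℕ :=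
  #{g : Tup s m | f (x ∘ g.1) < f (x ∘ t.1)}

lemma rank_comp_perm (f : (Fin s → 𝒮) → ℝ) (x : Fin m → 𝒮) (π : Equiv.Perm (Fin m))
    (t : Tup s m) : rank f (x ∘ π) t = rank f x (Tup.relabel π t) := by
  simp only [rank, card_filter]
  exact Equiv.sum_comp (Tup.relabel π)
    fun g => if f (x ∘ g.1) < f (x ∘ (Tup.relabel π t).1) then 1 else 0

lemma card_lt_le_rank (f : (Fin s → 𝒮) → ℝ) (x : Fin (n+1) → 𝒮) (t : Tup s (n+1)) :
    #{g : Tup s n | f (x ∘ Fin.castSucc ∘ g.1) < f (x ∘ t.1)} ≤ rank f x t :=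
  card_le_card_of_injOn (fun g => ⟨Fin.castSucc ∘ g.1, (Fin.castSucc_injective n).comp g.2⟩)
    (fun g hg => by simpa using hg)
    (fun a _ b _ hab => Subtype.ext (funext fun i =>
      Fin.castSucc_injective n (congrFun (congrArg Subtype.val hab) i)))

section Probability

variable [MeasurableSpace 𝒮]

lemma measurableSet_le_rank {f : (Fin s → 𝒮) → ℝ} (hf : Measurable f) (k : ℕ) (t : Tup s m) :
    MeasurableSet {x | k ≤ rank f x t} := by
  have hmeas : ∀ g : Tup s m, Measurable fun x : Fin m → 𝒮 => f (x ∘ g.1) :=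
    fun g => hf.comp (measurable_pi_lambda _ fun i => measurable_pi_apply _)
  have : Measurable fun x => rank f x t := by
    simp only [rank, card_filter]
    exact Finset.measurable_sum _ fun g _ =>
      Measurable.ite (measurableSet_lt (hmeas g) (hmeas t)) measurable_const measurable_const
  exact this measurableSet_Ici

lemma card_mul_measure_le_rank_le (μ : Measure 𝒮) [IsProbabilityMeasure μ]
    {f : (Fin s → 𝒮) → ℝ} (hf : Measurable f) (k : ℕ) (t₀ : Tup s m) :
    Fintype.card (Tup s m) * (Measure.pi fun _ => μ) {x | k ≤ rank f x t₀}
      ≤ (Fintype.card (Tup s m) - k : ℕ) := by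
  set ν := Measure.pi fun _ : Fin m => μ
  have hinv : ∀ t, ν {x | k ≤ rank f x t} = ν {x | k ≤ rank f x t₀} := fun t => by
    obtain ⟨π, rfl⟩ := Tup.exists_relabel_eq t₀ t
    simp only [← rank_comp_perm]
    exact (measurePreserving_comp_perm μ π).measure_preimage
      (measurableSet_le_rank hf k t₀).nullMeasurableSet
  calc Fintype.card (Tup s m) * ν {x | k ≤ rank f x t₀}
      = ∑ t, ν {x | k ≤ rank f x t} := by simp [hinv]
    _ ≤ (Fintype.card (Tup s m) - k : ℕ) * ν Set.univ :=
        sum_measure_le_mul_measure_univ ν (measurableSet_le_rank hf k)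
          fun x => by
            convert card_filter_le_card_filter_lt_le (fun t : Tup s m => f (x ∘ t.1)) k
            rfl
    _ = (Fintype.card (Tup s m) - k : ℕ) := by simp [ν]

lemma measureReal_le_rank_le (μ : Measure 𝒮) [IsProbabilityMeasure μ]
    {f : (Fin s → 𝒮) → ℝ} (hf : Measurable f) {k : ℕ}
    (hk : k ≤ Fintype.card (Tup s m)) (t₀ : Tup s m) :
    (Measure.pi fun _ => μ).real {x | k ≤ rank f x t₀}
      ≤ 1 - k / Fintype.card (Tup s m) := by
  have hM : (0 : ℝ) < Fintype.card (Tup s m) := by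
    have : Nonempty (Tup s m) := ⟨t₀⟩
    exact_mod_cast Fintype.card_pos
  have h := ENNReal.toReal_mono (ENNReal.natCast_ne_top _) (card_mul_measure_le_rank_le μ hf k t₀)
  rw [ENNReal.toReal_mul, ENNReal.toReal_natCast, ENNReal.toReal_natCast, Nat.cast_sub hk] at h
  rw [one_sub_div hM.ne', le_div_iff₀ hM]
  exact (mul_comm _ _).le.trans h

lemma measureReal_ceil_le_rank_le (μ : Measure 𝒮) [IsProbabilityMeasure μ] (hrn : r ≤ n)
    {τ : ℝ} (hτ1 : τ ≤ 1) {f : (Fin (r+1) → 𝒮) → ℝ} (hf : Measurable f) (t : Tup (r+1) (n+1)) :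
    (Measure.pi fun _ => μ).real {x | ⌈τ * Fintype.card (Tup (r+1) n)⌉₊ ≤ rank f x t}
      ≤ 1 - τ * (n - r) / (n + 1) := by
  have hk : ⌈τ * Fintype.card (Tup (r+1) n)⌉₊ ≤ Fintype.card (Tup (r+1) (n+1)) := by
    refine (Nat.ceil_mono (mul_le_of_le_one_left (Nat.cast_nonneg _) hτ1)).trans ?_
    rw [Nat.ceil_natCast, card_tup, card_tup]
    exact Nat.descFactorial_le _ n.le_succ
  refine (measureReal_le_rank_le μ hf hk t).trans (sub_le_sub_left ?_ 1)
  rw [mul_div_assoc, ← card_tup_div_card_tup hrn, ← mul_div_assoc]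
  gcongr
  exact Nat.le_ceil _

end Probability

lemma FMIic_eq (hrn : r < n) (E : Tup (r+1) n → ℝ) (b : ℝ) :
    FMIic n r E b = #{g | E g ≤ b} / Fintype.card (Tup (r+1) n) := by
  have hfac : (n - r - 1).factorial * Fintype.card (Tup (r+1) n) = n.factorial := by
    rw [card_tup, Nat.sub_sub, Nat.factorial_mul_descFactorial hrn]
  rw [FMIic, ← hfac]
  push_cast
  have : ((n - r - 1).factorial : ℝ) ≠ 0 := by positivity
  field_simp

lemma FMIci_eq_FMIic_neg (E : Tup (r+1) n → ℝ) (b : ℝ) : FMIci n r E b = FMIic n r (-E) (-b) := by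
  simp only [FMIci, FMIic, Pi.neg_apply, neg_le_neg_iff]

lemma elow_eq_neg_ebar_neg (E : Tup (r+1) n → ℝ) (τ : ℝ) : elow n r E τ = -ebar n r (-E) τ := by
  rw [elow, ebar, ← Real.sSup_neg]
  congr 1
  ext b
  simp [FMIci_eq_FMIic_neg]

lemma ceil_le_card_lt_of_ebar_lt (hrn : r < n) {τ : ℝ} (hτ0 : 0 < τ) (hτ1 : τ ≤ 1)
    {E : Tup (r+1) n → ℝ} {e : ℝ} (he : ebar n r E τ < e) :
    ⌈τ * Fintype.card (Tup (r+1) n)⌉₊ ≤ #{g | E g < e} := by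
  have hM : (0 : ℝ) < Fintype.card (Tup (r+1) n) := by exact_mod_cast card_tup_pos hrn
  have hmem : ∀ b, b ∈ {b | τ ≤ FMIic n r E b} ↔ τ * Fintype.card (Tup (r+1) n) ≤ #{g | E g ≤ b} :=
    fun b => by rw [Set.mem_ofPred_eq, FMIic_eq hrn, le_div_iff₀ hM]
  obtain ⟨lo, hlo⟩ := (Set.finite_range E).bddBelow
  obtain ⟨hi, hhi⟩ := (Set.finite_range E).bddAbove
  have hne : {b | τ ≤ FMIic n r E b}.Nonempty := by
    refine ⟨hi, (hmem hi).2 ?_⟩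
    rw [filter_true_of_mem fun g _ => hhi ⟨g, rfl⟩, card_univ]
    nlinarith
  have hbdd : BddBelow {b | τ ≤ FMIic n r E b} := by
    refine ⟨lo, fun b hb => ?_⟩
    obtain ⟨g, hg⟩ : ({g | E g ≤ b} : Finset _).Nonempty := by
      rw [← card_pos, ← Nat.cast_pos (α := ℝ)]
      exact (mul_pos hτ0 hM).trans_le ((hmem b).1 hb)
    exact (hlo ⟨g, rfl⟩).trans (mem_filter.1 hg).2
  obtain ⟨b, hb, hbe⟩ := (csInf_lt_iff hbdd hne).1 he
  refine Nat.ceil_le.2 (((hmem b).1 hb).trans ?_)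
  exact_mod_cast card_le_card (monotone_filter_right _ fun g _ (hg : E g ≤ b) => hg.trans_lt hbe)

lemma ceil_le_card_gt_of_lt_elow (hrn : r < n) {τ : ℝ} (hτ0 : 0 < τ) (hτ1 : τ ≤ 1)
    {E : Tup (r+1) n → ℝ} {e : ℝ} (he : e < elow n r E τ) :
    ⌈τ * Fintype.card (Tup (r+1) n)⌉₊ ≤ #{g | e < E g} := by
  rw [elow_eq_neg_ebar_neg, lt_neg] at he
  simpa using ceil_le_card_lt_of_ebar_lt hrn hτ0 hτ1 he

lemma le_rank_or_le_rank_of_notMem_Icc (hrn : r < n) {τ : ℝ} (hτ0 : 0 < τ) (hτ1 : τ ≤ 1)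
    {f : (Fin (r+1) → 𝒮) → ℝ} (x : Fin (n+1) → 𝒮) (t : Tup (r+1) (n+1))
    (h : f (x ∘ t.1) ∉ Set.Icc (elow n r (fun g => f (x ∘ Fin.castSucc ∘ g.1)) τ)
      (ebar n r (fun g => f (x ∘ Fin.castSucc ∘ g.1)) τ)) :
    ⌈τ * Fintype.card (Tup (r+1) n)⌉₊ ≤ rank (-f) x t ∨
      ⌈τ * Fintype.card (Tup (r+1) n)⌉₊ ≤ rank f x t := by
  rcases not_and_or.mp h with hlow | hup
  · have hrank := card_lt_le_rank (-f) x t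
    simp only [Pi.neg_apply, neg_lt_neg_iff] at hrank
    exact Or.inl ((ceil_le_card_gt_of_lt_elow hrn hτ0 hτ1 (not_le.mp hlow)).trans hrank)
  · exact Or.inr ((ceil_le_card_lt_of_ebar_lt hrn hτ0 hτ1 (not_le.mp hup)).trans
      (card_lt_le_rank f x t))

end TransferUQ

open TransferUQ in
/-- **Proposition 1, two-sided guarantee.** If `S_1, …, S_{n+1}` are i.i.d. samples and
`e_{(d_1,…,d_r),d} = f(S_{d_1},…,S_{d_r},S_d)` is the transfer error from training samples
`d_1,…,d_r` to test sample `d`, then the transfer error onto the unseen domain `n+1` satisfies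
`P(f(S_1,…,S_r,S_{n+1}) ∈ [ẹ_τ^M, ē_τ^M]) ≥ 2τ(n-r)/(n+1) - 1`. -/
theorem transfer_error_two_sided_coverage
    {Ω : Type*} [MeasurableSpace Ω] (P : Measure Ω) [IsProbabilityMeasure P]
    {𝒮 : Type*} [MeasurableSpace 𝒮] (μ : Measure 𝒮) [IsProbabilityMeasure μ]
    (n r : ℕ) (hrn : r < n)
    (S : Fin (n+1) → Ω → 𝒮) (hSmeas : ∀ i, Measurable (S i))
    (hindep : iIndepFun S P)
    (hlaw : ∀ i, P.map (S i) = μ)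
    (f : (Fin (r+1) → 𝒮) → ℝ) (hf : Measurable f)
    (τ : ℝ) (hτ : τ ∈ Set.Ioo (0:ℝ) 1) :
    ENNReal.ofReal (2 * τ * ((n : ℝ) - r) / (n + 1) - 1) ≤
      P {ω |
        f (Fin.snoc (fun i : Fin r => S (Fin.castLE (by omega) i) ω) (S (Fin.last n) ω)) ∈
          Set.Icc
            (TransferUQ.elow n r (fun g => f (fun i => S (Fin.castSucc (g.val i)) ω)) τ)
            (TransferUQ.ebar n r (fun g => f (fun i => S (Fin.castSucc (g.val i)) ω)) τ)} := by
  obtain ⟨hτ0, hτ1⟩ := hτ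
  let X : Ω → Fin (n+1) → 𝒮 := fun ω i => S i ω
  have hXmeas : Measurable X := measurable_pi_lambda _ hSmeas
  have hX : P.map X = Measure.pi fun _ => μ := by
    rw [hindep.map_fun_eq_pi_map fun i => (hSmeas i).aemeasurable]
    simp only [hlaw]
  let t₀ := testTup hrn.le
  let k := ⌈τ * Fintype.card (Tup (r+1) n)⌉₊
  have htail : ∀ g : (Fin (r+1) → 𝒮) → ℝ, Measurable g →
      P.real (X ⁻¹' {x | k ≤ rank g x t₀}) ≤ 1 - τ * (n - r) / (n + 1) := fun g hg => by
    rw [← map_measureReal_apply hXmeas (measurableSet_le_rank hg k t₀), hX]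
    exact measureReal_ceil_le_rank_le μ hrn.le hτ1.le hg t₀
  refine ENNReal.ofReal_le_of_le_toReal (le_trans ?_ (one_sub_sub_le_measureReal_of_compl_subset P
    (B₁ := X ⁻¹' {x | k ≤ rank (-f) x t₀}) (B₂ := X ⁻¹' {x | k ≤ rank f x t₀}) ?_))
  · have h2c : 2 * τ * ((n : ℝ) - r) / (n + 1) = 2 * (τ * (n - r) / (n + 1)) := by ring
    linarith [htail _ hf.neg, htail _ hf]
  intro ω hω
  have htest : f (Fin.snoc (fun i : Fin r => S (Fin.castLE (by omega) i) ω) (S (Fin.last n) ω)) =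
      f (X ω ∘ t₀.1) := congrArg f (Fin.comp_snoc (X ω) _ (Fin.last n)).symm
  simp only [Set.mem_compl_iff, Set.mem_ofPred_eq, htest] at hω
  exact le_rank_or_le_rank_of_notMem_Icc hrn hτ0 hτ1.le (X ω) t₀ hω
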